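/- Let p, p_i ∈ (1,∞) with ∑_{i=1}^m 1/p_i = 1/p, and φ, φ_i : ℝⁿ×(0,∞) → (0,∞) satisfying ∏_{i=1}^m φ_i^{1/p_i} = φ^{1/p} and the doubling condition for φ. Let K : (ℝⁿ)^{m+1} → ℂ (defined away from the diagonal x = y_1 = ⋯ = y_m) satisfy the size condition |K(x,y_1,…,y_m)| ≤ A/(∑_{i=1}^m |x−y_i|)^{mn}. Then there is a constant C such that for all f_i ∈ L^{(p_i,φ_i)}(ℝⁿ), every ball B = B(z,r), and every x ∈ B, with f_i^∞ = f_i χ_{(2B)^∁}: ∫_{(ℝⁿ)^m} |K(x,y_1,…,y_m) ∏_{i=1}^m f_i^∞(y_i)| dy_1⋯dy_m ≤ C (∫_{2r}^∞ φ(z,t)^{1/p}/t dt) ∏_{i=1}^m ‖f_i‖_{L^{(p_i,φ_i)}}. -/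

import Mathlib

open MeasureTheory Metric ENNReal

/-- The generalized Morrey norm of a real function. -/
noncomputable def morreyNorm (n : ℕ) (p : ℝ)
    (φ : EuclideanSpace ℝ (Fin n) → ℝ → ℝ) (f : EuclideanSpace ℝ (Fin n) → ℝ) : ℝ≥0∞ :=
  ⨆ (x : EuclideanSpace ℝ (Fin n)) (r : ℝ) (_ : 0 < r),
    ((∫⁻ y in ball x r, ENNReal.ofReal (|f y| ^ p)) /
      (ENNReal.ofReal (φ x r) * volume (ball x r))) ^ (1 / p)

/-- Doubling condition. -/
def DoublingCond (n : ℕ) (φ : EuclideanSpace ℝ (Fin n) → ℝ → ℝ) : Prop :=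
  ∃ C > (0 : ℝ), ∀ x (r s : ℝ), 0 < r → 0 < s → 1 / 2 ≤ r / s → r / s ≤ 2 →
    C⁻¹ ≤ φ x r / φ x s ∧ φ x r / φ x s ≤ C

/-!
The integrand is dominated by `∑ₖ A (2ᵏr)^{-mn} ∏ᵢ 1_{B(x, 2^{k+1} r)}(yᵢ) |fᵢ^∞(yᵢ)|`: outside
`2B` every `|x - yᵢ| ≥ r`, so `∑ |x - yᵢ|` lies in some `[2ᵏr, 2^{k+1}r)`. By Fubini and Hölder,
the `k`-th term is at most `A (2ᵏr)^{-mn} ∏ ‖fᵢ‖ φᵢ(z, 2^{k+2}r)^{1/pᵢ} |B(z, 2^{k+2}r)|`; the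
volumes cancel the kernel bound, `∏ φᵢ^{1/pᵢ} = φ^{1/p}`, and doubling makes
`φ(z, 2^{k+2}r)^{1/p}` comparable to `∫_{2^{k+1}r}^{2^{k+2}r} φ(z,t)^{1/p} dt/t`. These intervals
tile `(2r, ∞)`.
-/

open Set

theorem lintegral_fin_nat_prod_eq_prod {m : ℕ} {E : Type*} [MeasurableSpace E]
    {μ : Fin m → Measure E} [∀ i, SigmaFinite (μ i)] {g : Fin m → E → ℝ≥0∞}
    (hg : ∀ i, Measurable (g i)) :
    ∫⁻ y, ∏ i, g i (y i) ∂Measure.pi μ = ∏ i, ∫⁻ t, g i t ∂μ i := by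
  induction m with
  | zero => simp
  | succ m ih =>
    rw [← (measurePreserving_piFinSuccAbove μ 0).symm.lintegral_comp_emb
      (MeasurableEquiv.measurableEmbedding _)]
    simp_rw [MeasurableEquiv.piFinSuccAbove_symm_apply, Fin.insertNthEquiv,
      Fin.prod_univ_succ, Fin.insertNth_zero]
    simp only [Fin.zero_succAbove, Fin.cons_zero, Fin.cons_succ, cast_eq, Equiv.coe_fn_mk]
    rw [lintegral_prod_mul (f := g 0) (g := fun w : Fin m → E ↦ ∏ i, g i.succ (w i))
      (hg 0).aemeasurable
      (Finset.measurable_prod _ fun i _ ↦ (hg i.succ).comp (measurable_pi_apply i)).aemeasurable,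
      ih fun i ↦ hg i.succ]

theorem lintegral_tsum_mul_prod_indicator {m : ℕ} {E : Type*} [MeasurableSpace E]
    {μ : Measure E} [SigmaFinite μ] {c : ℕ → ℝ≥0∞} {s : ℕ → Set E}
    (hs : ∀ k, MeasurableSet (s k)) {g : Fin m → E → ℝ≥0∞} (hg : ∀ i, Measurable (g i)) :
    ∫⁻ y, ∑' k, c k * ∏ i, (s k).indicator (g i) (y i) ∂Measure.pi (fun _ ↦ μ) =
      ∑' k, c k * ∏ i, ∫⁻ t in s k, g i t ∂μ := by
  have hind : ∀ k i, Measurable ((s k).indicator (g i)) := fun k i ↦ (hg i).indicator (hs k)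
  have hprod : ∀ k, Measurable fun y : Fin m → E ↦ ∏ i, (s k).indicator (g i) (y i) := fun k ↦
    Finset.measurable_prod _ fun i _ ↦ (hind k i).comp (measurable_pi_apply i)
  rw [lintegral_tsum fun k ↦ ((hprod k).const_mul _).aemeasurable]
  refine tsum_congr fun k ↦ ?_
  rw [lintegral_const_mul _ (hprod k), lintegral_fin_nat_prod_eq_prod (hind k)]
  simp_rw [lintegral_indicator (hs k)]

theorem lintegral_le_lintegral_rpow_mul_measure_univ {α : Type*} [MeasurableSpace α]
    {μ : Measure α} {q q' : ℝ} (hqq' : q.HolderConjugate q') {g : α → ℝ≥0∞}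
    (hg : AEMeasurable g μ) :
    ∫⁻ a, g a ∂μ ≤ (∫⁻ a, g a ^ q ∂μ) ^ (1 / q) * μ univ ^ (1 / q') := by
  simpa [hqq'.symm.pos.ne', lintegral_const] using
    ENNReal.lintegral_mul_le_Lp_mul_Lq μ hqq' hg (aemeasurable_const (b := (1 : ℝ≥0∞)))

theorem tsum_setLIntegral_Ioc_two_pow_le {F : ℝ → ℝ≥0∞} {a : ℝ} (ha : 0 < a) :
    ∑' k : ℕ, ∫⁻ t in Ioc (2 * (2 ^ k * a)) (2 * (2 * (2 ^ k * a))), F t ≤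
      ∫⁻ t in Ioi (2 * a), F t := by
  have hmono : Monotone fun k : ℕ ↦ 2 * (2 ^ k * a) := fun j k hjk ↦ by
    dsimp only
    gcongr
    exact one_le_two
  have hdisj := hmono.pairwise_disjoint_on_Ioc_succ
  simp only [Order.succ_eq_add_one, pow_succ', mul_assoc] at hdisj
  rw [← lintegral_iUnion (fun _ ↦ measurableSet_Ioc) hdisj]
  refine lintegral_mono_set (iUnion_subset fun k t ht ↦ lt_of_le_of_lt ?_ ht.1)
  simpa using hmono (Nat.zero_le k)

theorem ofReal_le_mul_setLIntegral_Ioc_div {ψ : ℝ → ℝ} {a C : ℝ} (ha : 0 < a) (hC : 0 < C)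
    (hψ : ∀ t ∈ Ioc a (2 * a), 0 ≤ ψ t ∧ ψ (2 * a) ≤ C * ψ t) :
    ENNReal.ofReal (ψ (2 * a)) ≤
      ENNReal.ofReal (2 * C) * ∫⁻ t in Ioc a (2 * a), ENNReal.ofReal (ψ t / t) := by
  have hlow : ∀ t ∈ Ioc a (2 * a),
      ENNReal.ofReal (ψ (2 * a) / (2 * C * a)) ≤ ENNReal.ofReal (ψ t / t) := by
    rintro t ⟨hat, hta⟩
    obtain ⟨hψt, hψle⟩ := hψ t ⟨hat, hta⟩
    refine ENNReal.ofReal_le_ofReal ?_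
    calc ψ (2 * a) / (2 * C * a) ≤ C * ψ t / (2 * C * a) := by gcongr
      _ = ψ t / (2 * a) := by field_simp
      _ ≤ ψ t / t := div_le_div_of_nonneg_left hψt (ha.trans hat) hta
  calc ENNReal.ofReal (ψ (2 * a))
      = ENNReal.ofReal (2 * C) * (ENNReal.ofReal (ψ (2 * a) / (2 * C * a)) * ENNReal.ofReal a) := by
        rw [← ENNReal.ofReal_mul' ha.le, ← ENNReal.ofReal_mul (by positivity)]
        congr 1
        field_simp
    _ = ENNReal.ofReal (2 * C) *
          ∫⁻ _ in Ioc a (2 * a), ENNReal.ofReal (ψ (2 * a) / (2 * C * a)) := by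
        rw [setLIntegral_const, Real.volume_Ioc, show 2 * a - a = a by ring]
    _ ≤ _ := mul_le_mul_right (setLIntegral_mono' measurableSet_Ioc hlow) _

theorem setLIntegral_ball_rpow_le_morreyNorm {n : ℕ} {q : ℝ} (hq : 0 < q)
    {φ : EuclideanSpace ℝ (Fin n) → ℝ → ℝ} {f : EuclideanSpace ℝ (Fin n) → ℝ}
    {c : EuclideanSpace ℝ (Fin n)} {R : ℝ} (hR : 0 < R) (hφ : 0 < φ c R) :
    ∫⁻ t in ball c R, ENNReal.ofReal (|f t| ^ q) ≤
      morreyNorm n q φ f ^ q * (ENNReal.ofReal (φ c R) * volume (ball c R)) := by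
  have hden₀ : ENNReal.ofReal (φ c R) * volume (ball c R) ≠ 0 :=
    mul_ne_zero (ENNReal.ofReal_pos.mpr hφ).ne' (measure_ball_pos _ _ hR).ne'
  have hden_top : ENNReal.ofReal (φ c R) * volume (ball c R) ≠ ⊤ :=
    ENNReal.mul_ne_top ENNReal.ofReal_ne_top measure_ball_lt_top.ne
  have hle : ((∫⁻ t in ball c R, ENNReal.ofReal (|f t| ^ q)) /
      (ENNReal.ofReal (φ c R) * volume (ball c R))) ^ (1 / q) ≤ morreyNorm n q φ f :=
    le_iSup_of_le c (le_iSup_of_le R (le_iSup_of_le hR le_rfl))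
  have := ENNReal.rpow_le_rpow hle hq.le
  rwa [← ENNReal.rpow_mul, one_div_mul_cancel hq.ne', ENNReal.rpow_one,
    ENNReal.div_le_iff_le_mul (.inl hden₀) (.inl hden_top)] at this

theorem setLIntegral_ball_le_morreyNorm {n : ℕ} {q : ℝ} (hq : 1 < q)
    {φ : EuclideanSpace ℝ (Fin n) → ℝ → ℝ} {f : EuclideanSpace ℝ (Fin n) → ℝ}
    (hf : Measurable f) {c : EuclideanSpace ℝ (Fin n)} {R : ℝ} (hR : 0 < R) (hφ : 0 < φ c R) :
    ∫⁻ t in ball c R, ENNReal.ofReal |f t| ≤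
      morreyNorm n q φ f * ENNReal.ofReal (φ c R) ^ (1 / q) * volume (ball c R) := by
  have hqq' := Real.HolderConjugate.conjExponent hq
  have hq₀ : 0 ≤ 1 / q := by positivity
  have hV₀ : volume (ball c R) ≠ 0 := (measure_ball_pos _ _ hR).ne'
  calc ∫⁻ t in ball c R, ENNReal.ofReal |f t|
      ≤ (∫⁻ t in ball c R, ENNReal.ofReal |f t| ^ q) ^ (1 / q) *
          volume (ball c R) ^ (1 / q.conjExponent) := by
        simpa using lintegral_le_lintegral_rpow_mul_measure_univ hqq'
          (μ := volume.restrict (ball c R)) hf.abs.ennreal_ofReal.aemeasurable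
    _ ≤ (morreyNorm n q φ f ^ q * (ENNReal.ofReal (φ c R) * volume (ball c R))) ^ (1 / q) *
          volume (ball c R) ^ (1 / q.conjExponent) := by
        gcongr
        simpa only [ENNReal.ofReal_rpow_of_nonneg (abs_nonneg _) (zero_le_one.trans hq.le)]
          using setLIntegral_ball_rpow_le_morreyNorm (f := f) (by linarith) hR hφ
    _ = morreyNorm n q φ f * ENNReal.ofReal (φ c R) ^ (1 / q) *
          volume (ball c R) ^ (1 / q + 1 / q.conjExponent) := by
        rw [ENNReal.mul_rpow_of_nonneg _ _ hq₀, ENNReal.mul_rpow_of_nonneg _ _ hq₀,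
          ← ENNReal.rpow_mul, mul_one_div_cancel (by linarith), ENNReal.rpow_one,
          ENNReal.rpow_add _ _ hV₀ measure_ball_lt_top.ne]
        ring
    _ = _ := by rw [one_div, one_div, hqq'.inv_add_inv_eq_one, ENNReal.rpow_one]

theorem prod_setLIntegral_ball_le_morreyNorm {n : ℕ} {ι : Type*} [Fintype ι] {p : ℝ}
    {pp : ι → ℝ} (hpp : ∀ i, 1 < pp i) {φ : EuclideanSpace ℝ (Fin n) → ℝ → ℝ}
    {φi : ι → EuclideanSpace ℝ (Fin n) → ℝ → ℝ} {c : EuclideanSpace ℝ (Fin n)} {R : ℝ}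
    (hR : 0 < R) (hφi : ∀ i, 0 < φi i c R) (hprod : ∏ i, φi i c R ^ (1 / pp i) = φ c R ^ (1 / p))
    {f : ι → EuclideanSpace ℝ (Fin n) → ℝ} (hf : ∀ i, Measurable (f i)) :
    ∏ i, ∫⁻ t in ball c R, ENNReal.ofReal |f i t| ≤
      (∏ i, morreyNorm n (pp i) (φi i) (f i)) * ENNReal.ofReal (φ c R ^ (1 / p)) *
        volume (ball c R) ^ Fintype.card ι := by
  calc ∏ i, ∫⁻ t in ball c R, ENNReal.ofReal |f i t|
      ≤ ∏ i, morreyNorm n (pp i) (φi i) (f i) * ENNReal.ofReal (φi i c R) ^ (1 / pp i) *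
          volume (ball c R) :=
        Finset.prod_le_prod' fun i _ ↦ setLIntegral_ball_le_morreyNorm (hpp i) (hf i) hR (hφi i)
    _ = _ := by
      rw [Finset.prod_mul_distrib, Finset.prod_mul_distrib, Finset.prod_const, Finset.card_univ,
        ← hprod, ENNReal.ofReal_prod_of_nonneg fun i _ ↦ Real.rpow_nonneg (hφi i).le _]
      congr 2
      exact Finset.prod_congr rfl fun i _ ↦
        ENNReal.ofReal_rpow_of_nonneg (hφi i).le
          (one_div_nonneg.mpr (zero_le_one.trans (hpp i).le))

theorem DoublingCond.exists_le_mul {n : ℕ} {φ : EuclideanSpace ℝ (Fin n) → ℝ → ℝ}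
    (hφ : DoublingCond n φ) (hφpos : ∀ x r, 0 < r → 0 < φ x r) :
    ∃ C > 0, ∀ x {R t : ℝ}, 0 < t → t ≤ R → R ≤ 2 * t → φ x R ≤ C * φ x t := by
  obtain ⟨C, hC, hφC⟩ := hφ
  refine ⟨C, hC, fun x R t ht htR hRt ↦ ?_⟩
  have hR : 0 < R := ht.trans_le htR
  have hratio := (hφC x R t hR ht (by rw [le_div_iff₀ ht]; linarith)
    (by rw [div_le_iff₀ ht]; linarith)).2
  rwa [div_le_iff₀ (hφpos x t ht)] at hratio

theorem DoublingCond.exists_ofReal_rpow_le_setLIntegral {n : ℕ}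
    {φ : EuclideanSpace ℝ (Fin n) → ℝ → ℝ} (hφ : DoublingCond n φ)
    (hφpos : ∀ x r, 0 < r → 0 < φ x r) {q : ℝ} (hq : 0 ≤ q) :
    ∃ C > 0, ∀ x {a : ℝ}, 0 < a → ENNReal.ofReal (φ x (2 * a) ^ q) ≤
      ENNReal.ofReal C * ∫⁻ t in Ioc a (2 * a), ENNReal.ofReal (φ x t ^ q / t) := by
  obtain ⟨Cd, hCd, hφCd⟩ := hφ.exists_le_mul hφpos
  refine ⟨2 * Cd ^ q, by positivity, fun x a ha ↦ ?_⟩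
  simpa [mul_assoc] using ofReal_le_mul_setLIntegral_Ioc_div (ψ := fun t ↦ φ x t ^ q) ha
    (Real.rpow_pos_of_pos hCd q) fun t ⟨hat, hta⟩ ↦ by
      have ht : 0 < t := ha.trans hat
      refine ⟨Real.rpow_nonneg (hφpos x t ht).le _, ?_⟩
      rw [← Real.mul_rpow hCd.le (hφpos x t ht).le]
      exact Real.rpow_le_rpow (hφpos x _ (by positivity)).le
        (hφCd x ht hta (by linarith)) hq

theorem ofReal_abs_mul_prod_le_tsum_dyadic {X ι : Type*} [PseudoMetricSpace X] [Fintype ι]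
    [Nonempty ι] {v A r : ℝ} {d : ℕ} (hA : 0 ≤ A) (hr : 0 < r) {x : X} {y : ι → X}
    {g : ι → X → ℝ≥0∞} (hg : ∀ i, ∀ t ∈ ball x r, g i t = 0)
    (hv : (∃ i, y i ≠ x) → |v| ≤ A / (∑ i, dist x (y i)) ^ d) :
    ENNReal.ofReal |v| * ∏ i, g i (y i) ≤
      ∑' k : ℕ, ENNReal.ofReal (A / (2 ^ k * r) ^ d) *
        ∏ i, (ball x (2 * (2 ^ k * r))).indicator (g i) (y i) := by
  by_cases hfar : ∀ i, r ≤ dist x (y i)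
  · set S := ∑ i, dist x (y i)
    obtain ⟨i₀⟩ := ‹Nonempty ι›
    have hdist_le : ∀ i, dist x (y i) ≤ S := fun i ↦
      Finset.single_le_sum (fun j _ ↦ dist_nonneg) (Finset.mem_univ i)
    obtain ⟨k, hkS, hSk⟩ :=
      exists_nat_pow_near ((one_le_div hr).mpr ((hfar i₀).trans (hdist_le i₀))) one_lt_two
    rw [le_div_iff₀ hr] at hkS
    rw [div_lt_iff₀ hr, pow_succ, mul_comm _ (2 : ℝ), mul_assoc] at hSk
    refine le_trans ?_ (ENNReal.le_tsum k)
    gcongr ENNReal.ofReal ?_ * ?_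
    · have hy₀ : y i₀ ≠ x := fun h ↦ by simpa [h, hr.not_ge] using hfar i₀
      calc |v| ≤ A / S ^ d := hv ⟨i₀, hy₀⟩
        _ ≤ A / (2 ^ k * r) ^ d := by gcongr
    · refine (Finset.prod_congr rfl fun i _ ↦ Set.indicator_of_mem ?_ _).ge
      rw [mem_ball, dist_comm]
      exact (hdist_le i).trans_lt hSk
  · obtain ⟨i, hi⟩ := not_forall.mp hfar
    have hyi : y i ∈ ball x r := by rwa [mem_ball, dist_comm, ← not_le]
    rw [Finset.prod_eq_zero (Finset.mem_univ i) (hg i (y i) hyi), mul_zero]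
    exact zero_le

theorem lintegral_ofReal_abs_mul_prod_le_tsum {X : Type*} [PseudoMetricSpace X] [MeasureSpace X]
    [OpensMeasurableSpace X] [SigmaFinite (volume : Measure X)] {m d : ℕ} [Nonempty (Fin m)]
    {K : X → (Fin m → X) → ℝ} {A r : ℝ} (hA : 0 ≤ A) (hr : 0 < r) {x : X}
    (hK : ∀ y, (∃ i, y i ≠ x) → |K x y| ≤ A / (∑ i, dist x (y i)) ^ d)
    {g : Fin m → X → ℝ≥0∞} (hg : ∀ i, Measurable (g i)) (hg_near : ∀ i, ∀ t ∈ ball x r, g i t = 0) :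
    ∫⁻ y : Fin m → X, ENNReal.ofReal |K x y| * ∏ i, g i (y i) ≤
      ∑' k : ℕ, ENNReal.ofReal (A / (2 ^ k * r) ^ d) *
        ∏ i, ∫⁻ t in ball x (2 * (2 ^ k * r)), g i t := by
  calc _ ≤ ∫⁻ y : Fin m → X, ∑' k : ℕ, ENNReal.ofReal (A / (2 ^ k * r) ^ d) *
        ∏ i, (ball x (2 * (2 ^ k * r))).indicator (g i) (y i) :=
        lintegral_mono fun y ↦ ofReal_abs_mul_prod_le_tsum_dyadic hA hr hg_near (hK y)
    _ = _ := lintegral_tsum_mul_prod_indicator (fun _ ↦ measurableSet_ball) hg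

theorem ofReal_div_pow_mul_prod_setLIntegral_le {n m : ℕ} {p : ℝ} {pp : Fin m → ℝ}
    (hpp : ∀ i, 1 < pp i) {φ : EuclideanSpace ℝ (Fin n) → ℝ → ℝ}
    {φi : Fin m → EuclideanSpace ℝ (Fin n) → ℝ → ℝ} {x z : EuclideanSpace ℝ (Fin n)} {A s : ℝ}
    (hA : 0 ≤ A) (hs : 0 < s) (hxz : dist x z ≤ 2 * s) (hφi : ∀ i, 0 < φi i z (2 * (2 * s)))
    (hprod : ∏ i, φi i z (2 * (2 * s)) ^ (1 / pp i) = φ z (2 * (2 * s)) ^ (1 / p))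
    {f : Fin m → EuclideanSpace ℝ (Fin n) → ℝ} (hf : ∀ i, Measurable (f i))
    {g : Fin m → EuclideanSpace ℝ (Fin n) → ℝ≥0∞} (hg : ∀ i t, g i t ≤ ENNReal.ofReal |f i t|) :
    ENNReal.ofReal (A / s ^ (m * n)) * ∏ i, ∫⁻ t in ball x (2 * s), g i t ≤
      ENNReal.ofReal (A * 4 ^ (m * n) *
          (volume (ball (0 : EuclideanSpace ℝ (Fin n)) 1)).toReal ^ m) *
        (∏ i, morreyNorm n (pp i) (φi i) (f i)) *
        ENNReal.ofReal (φ z (2 * (2 * s)) ^ (1 / p)) := by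
  have hsub : ball x (2 * s) ⊆ ball z (2 * (2 * s)) := ball_subset_ball' (by linarith)
  have hvol : ENNReal.ofReal (A / s ^ (m * n)) * volume (ball z (2 * (2 * s))) ^ m =
      ENNReal.ofReal (A * 4 ^ (m * n) *
        (volume (ball (0 : EuclideanSpace ℝ (Fin n)) 1)).toReal ^ m) := by
    rw [Measure.addHaar_ball_of_pos _ _ (by positivity), finrank_euclideanSpace_fin,
      ENNReal.ofReal_mul (by positivity), ENNReal.ofReal_pow ENNReal.toReal_nonneg,
      ENNReal.ofReal_toReal measure_ball_lt_top.ne, mul_pow, ← ENNReal.ofReal_pow (by positivity),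
      ← mul_assoc, ← ENNReal.ofReal_mul (by positivity)]
    congr 2
    field_simp
    ring
  calc _ ≤ ENNReal.ofReal (A / s ^ (m * n)) *
        ∏ i, ∫⁻ t in ball z (2 * (2 * s)), ENNReal.ofReal |f i t| := by
        refine mul_le_mul_right (Finset.prod_le_prod' fun i _ ↦ ?_) _
        exact lintegral_mono' (Measure.restrict_mono hsub le_rfl) (hg i)
    _ ≤ ENNReal.ofReal (A / s ^ (m * n)) * ((∏ i, morreyNorm n (pp i) (φi i) (f i)) *
          ENNReal.ofReal (φ z (2 * (2 * s)) ^ (1 / p)) * volume (ball z (2 * (2 * s))) ^ m) := by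
        gcongr
        simpa using prod_setLIntegral_ball_le_morreyNorm hpp (by positivity) hφi hprod hf
    _ = _ := by
        rw [← hvol]
        ring

theorem far_part_kernel_estimate_general (n m : ℕ) (p : ℝ) (pp : Fin m → ℝ)
    (hp : 1 < p) (hpp : ∀ i, 1 < pp i)
    (hsum : ∑ i, 1 / pp i = 1 / p)
    (φ : EuclideanSpace ℝ (Fin n) → ℝ → ℝ)
    (φi : Fin m → EuclideanSpace ℝ (Fin n) → ℝ → ℝ)
    (hφpos : ∀ x r, 0 < r → 0 < φ x r)
    (hφipos : ∀ i x r, 0 < r → 0 < φi i x r)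
    (hprod : ∀ x (r : ℝ), 0 < r → ∏ i, φi i x r ^ (1 / pp i) = φ x r ^ (1 / p))
    (hφdoub : DoublingCond n φ)
    (K : EuclideanSpace ℝ (Fin n) → (Fin m → EuclideanSpace ℝ (Fin n)) → ℝ)
    (A : ℝ) (hA : 0 < A)
    (hKsize : ∀ x y, (∃ i, y i ≠ x) →
      |K x y| ≤ A / (∑ i, dist x (y i)) ^ (m * n)) :
    ∃ C : ℝ, 0 < C ∧
      ∀ f : Fin m → EuclideanSpace ℝ (Fin n) → ℝ, (∀ i, Measurable (f i)) →
        ∀ z (r : ℝ), 0 < r → ∀ x ∈ ball z r,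
          (∫⁻ y : Fin m → EuclideanSpace ℝ (Fin n),
              ENNReal.ofReal |K x y| *
                ∏ i, ENNReal.ofReal |((ball z (2 * r))ᶜ).indicator (f i) (y i)|)
            ≤ ENNReal.ofReal C *
                (∫⁻ t in Set.Ioi (2 * r), ENNReal.ofReal (φ z t ^ (1 / p) / t)) *
                ∏ i, morreyNorm n (pp i) (φi i) (f i) := by
  have hm : Nonempty (Fin m) := Fin.pos_iff_nonempty.mp <| Nat.pos_of_ne_zero fun hm ↦ by
    subst hm
    simp only [Finset.univ_eq_empty, Finset.sum_empty] at hsum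
    linarith [one_div_pos.mpr (zero_lt_one.trans hp)]
  obtain ⟨Cφ, hCφ, hφ_int⟩ :=
    hφdoub.exists_ofReal_rpow_le_setLIntegral hφpos (q := 1 / p) (by positivity)
  set v₁ := (volume (ball (0 : EuclideanSpace ℝ (Fin n)) 1)).toReal
  have hv₁ : 0 < v₁ := ENNReal.toReal_pos (measure_ball_pos _ _ one_pos).ne' measure_ball_lt_top.ne
  refine ⟨A * 4 ^ (m * n) * v₁ ^ m * Cφ, by positivity, fun f hf z r hr x hx ↦ ?_⟩
  set g := fun i t ↦ ENNReal.ofReal |((ball z (2 * r))ᶜ).indicator (f i) t|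
  set F := fun t ↦ ENNReal.ofReal (φ z t ^ (1 / p) / t)
  set N := ∏ i, morreyNorm n (pp i) (φi i) (f i)
  have hg_le : ∀ i t, g i t ≤ ENNReal.ofReal |f i t| := fun i t ↦ ENNReal.ofReal_le_ofReal <| by
    simpa only [Real.norm_eq_abs] using norm_indicator_le_norm_self (f i) t
  have hg_near : ∀ i, ∀ t ∈ ball x r, g i t = 0 := fun i t ht ↦ by
    have htz : t ∈ ball z (2 * r) := by
      rw [mem_ball] at *
      linarith [dist_triangle t x z]
    simp [g, htz]
  calc _ ≤ ∑' k : ℕ, ENNReal.ofReal (A / (2 ^ k * r) ^ (m * n)) *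
        ∏ i, ∫⁻ t in ball x (2 * (2 ^ k * r)), g i t :=
        lintegral_ofReal_abs_mul_prod_le_tsum hA.le hr (hKsize x) (fun i ↦
          ((hf i).indicator measurableSet_ball.compl).abs.ennreal_ofReal) hg_near
    _ ≤ ∑' k : ℕ, ENNReal.ofReal (A * 4 ^ (m * n) * v₁ ^ m * Cφ) * N *
          ∫⁻ t in Ioc (2 * (2 ^ k * r)) (2 * (2 * (2 ^ k * r))), F t := by
        refine ENNReal.tsum_le_tsum fun k ↦ ?_
        have hs : r ≤ 2 ^ k * r := le_mul_of_one_le_left hr.le (one_le_pow₀ one_le_two)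
        calc _ ≤ ENNReal.ofReal (A * 4 ^ (m * n) * v₁ ^ m) * N *
              ENNReal.ofReal (φ z (2 * (2 * (2 ^ k * r))) ^ (1 / p)) :=
              ofReal_div_pow_mul_prod_setLIntegral_le hpp hA.le (by positivity)
                (by linarith [mem_ball.mp hx]) (fun i ↦ hφipos i z _ (by positivity))
                (hprod z _ (by positivity)) hf hg_le
          _ ≤ ENNReal.ofReal (A * 4 ^ (m * n) * v₁ ^ m) * N *
              (ENNReal.ofReal Cφ * ∫⁻ t in Ioc (2 * (2 ^ k * r)) (2 * (2 * (2 ^ k * r))), F t) := by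
              gcongr
              exact hφ_int z (by positivity)
          _ = _ := by
              rw [ENNReal.ofReal_mul (p := A * 4 ^ (m * n) * v₁ ^ m) (by positivity)]
              ring
    _ ≤ ENNReal.ofReal (A * 4 ^ (m * n) * v₁ ^ m * Cφ) * N * ∫⁻ t in Ioi (2 * r), F t := by
        rw [ENNReal.tsum_mul_left]
        gcongr
        exact tsum_setLIntegral_Ioc_two_pow_le hr
    _ = _ := by ring

/-- for a kernel with the standard size estimate, the "far part"
of the multilinear singular integral is controlled:
`∫ |K(x,y⃗) ∏ fᵢ^∞(yᵢ)| dy⃗ ≤ C (∫_{2r}^∞ φ(z,t)^{1/p}/t dt) ∏ ‖fᵢ‖_{L^{(pᵢ,φᵢ)}}`. -/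
theorem far_part_kernel_estimate (n m : ℕ) (p : ℝ) (pp : Fin m → ℝ)
    (hp : 1 < p) (hpp : ∀ i, 1 < pp i)
    (hsum : ∑ i, 1 / pp i = 1 / p)
    (φ : EuclideanSpace ℝ (Fin n) → ℝ → ℝ)
    (φi : Fin m → EuclideanSpace ℝ (Fin n) → ℝ → ℝ)
    (hφpos : ∀ x r, 0 < r → 0 < φ x r)
    (hφipos : ∀ i x r, 0 < r → 0 < φi i x r)
    (hprod : ∀ x (r : ℝ), 0 < r → ∏ i, φi i x r ^ (1 / pp i) = φ x r ^ (1 / p))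
    (hφdoub : DoublingCond n φ)
    (K : EuclideanSpace ℝ (Fin n) → (Fin m → EuclideanSpace ℝ (Fin n)) → ℝ)
    (hKmeas : Measurable (Function.uncurry K))
    (A : ℝ) (hA : 0 < A)
    (hKsize : ∀ x y, (∃ i, y i ≠ x) →
      |K x y| ≤ A / (∑ i, dist x (y i)) ^ (m * n)) :
    ∃ C : ℝ, 0 < C ∧
      ∀ f : Fin m → EuclideanSpace ℝ (Fin n) → ℝ, (∀ i, Measurable (f i)) →
        ∀ z (r : ℝ), 0 < r → ∀ x ∈ ball z r,
          (∫⁻ y : Fin m → EuclideanSpace ℝ (Fin n),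
              ENNReal.ofReal |K x y| *
                ∏ i, ENNReal.ofReal |((ball z (2 * r))ᶜ).indicator (f i) (y i)|)
            ≤ ENNReal.ofReal C *
                (∫⁻ t in Set.Ioi (2 * r), ENNReal.ofReal (φ z t ^ (1 / p) / t)) *
                ∏ i, morreyNorm n (pp i) (φi i) (f i) :=
  far_part_kernel_estimate_general n m p pp hp hpp hsum φ φi hφpos hφipos hprod hφdoub K A hA hKsize
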